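/- arXiv:1207.3629 — 2 statements merged into one kernel-verified Lean document; each statement's English description precedes it below -/
import Mathlib

section
/- The dual of an arithmetic matroid is an arithmetic matroid: if (M,m) satisfies axioms (A1), (A2) and (P), then the pair (M*, m*) with rk*(A) = |A| - rk(E) + rk(E∖A) and m*(A) = m(E∖A) also satisfies (A1), (A2) and (P). -/
/-- `[R, R ∪ F ∪ T]` is a molecule for the (integer-valued) rank function `rk`. -/
def IsMoleculeWith {α : Type*} [DecidableEq α] (rk : Finset α → ℤ)
    (R F T : Finset α) : Prop :=
  Disjoint R F ∧ Disjoint R T ∧ Disjoint F T ∧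
  ∀ A : Finset α, R ⊆ A → A ⊆ R ∪ F ∪ T → rk A = rk R + (A ∩ F).card

/-- `ρ(R,S) = (-1)^{|T|} Σ_{A ∈ [R,S]} (-1)^{|S|-|A|} m(A)`, where `T` is the dependent
part of the molecule `[R,S]`. -/
def rho {α : Type*} [DecidableEq α] (m : Finset α → ℕ) (T R S : Finset α) : ℤ :=
  (-1) ^ T.card * ∑ A ∈ Finset.Icc R S, (-1) ^ (S.card - A.card) * (m A : ℤ)

/-- The axioms (A1), (A2), (P) of an arithmetic matroid, for a rank function `rk` and a
multiplicity function `m` on subsets of a finite ground set. -/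
def IsArithmeticMatroid {α : Type*} [Fintype α] [DecidableEq α]
    (rk : Finset α → ℤ) (m : Finset α → ℕ) : Prop :=
  -- matroid rank axioms
  (rk ∅ = 0) ∧
  (∀ A B : Finset α, A ⊆ B → rk A ≤ rk B) ∧
  (∀ A B : Finset α, rk (A ∪ B) + rk (A ∩ B) ≤ rk A + rk B) ∧
  (∀ (A : Finset α) (e : α), rk (insert e A) ≤ rk A + 1) ∧
  -- (A1)
  (∀ (A : Finset α) (e : α), e ∉ A →
    (rk (insert e A) = rk A → m (insert e A) ∣ m A) ∧
    (rk (insert e A) ≠ rk A → m A ∣ m (insert e A))) ∧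
  -- (A2)
  (∀ R F T : Finset α, IsMoleculeWith rk R F T →
    m R * m (R ∪ F ∪ T) = m (R ∪ F) * m (R ∪ T)) ∧
  -- (P)
  (∀ R F T : Finset α, IsMoleculeWith rk R F T → 0 ≤ rho m T R (R ∪ F ∪ T))

/-!
Complementation `A ↦ Aᶜ` maps the interval `[R, R ∪ F ∪ T]` onto `[(R ∪ F ∪ T)ᶜ, Rᶜ]`, and
turns a molecule of the dual rank into a molecule of `rk` with the roles of `F` and `T`
exchanged. Through this correspondence (A2) for `m*` is (A2) for `m`, and `ρ*` of a molecule is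
`ρ` of the complementary one, the signs `(-1)^(|T| + |S| - |A|)` and `(-1)^(|F| + |A| - |R|)`
having the same parity because `|S| = |R| + |F| + |T|`. For (A1), adding `e ∉ A` keeps the dual
rank exactly when adding `e` to `(insert e A)ᶜ` raises `rk`.
-/

open Finset

theorem rk_union_le_add_card {α : Type*} [DecidableEq α] {rk : Finset α → ℤ}
    (hunit : ∀ (A : Finset α) (e : α), rk (insert e A) ≤ rk A + 1) (A B : Finset α) :
    rk (A ∪ B) ≤ rk A + #B := by
  induction B using Finset.induction_on with
  | empty => simp
  | insert e B he ih =>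
    rw [union_insert, card_insert_of_notMem he, Nat.cast_succ]
    linarith [hunit (A ∪ B) e]

theorem compl_union_union_cancel {α : Type*} [Fintype α] [DecidableEq α] {X T : Finset α}
    (h : Disjoint X T) : (X ∪ T)ᶜ ∪ T = Xᶜ := by
  rw [compl_union, ← sdiff_eq_inter_compl]
  exact sdiff_union_of_subset (subset_compl_iff_disjoint_left.mpr h)

theorem IsMoleculeWith.card_union_union {α : Type*} [DecidableEq α] {rk : Finset α → ℤ}
    {R F T : Finset α} (h : IsMoleculeWith rk R F T) : #(R ∪ F ∪ T) = #R + #F + #T := by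
  obtain ⟨hRF, hRT, hFT, -⟩ := h
  rw [card_union_of_disjoint (disjoint_union_left.mpr ⟨hRT, hFT⟩), card_union_of_disjoint hRF]

section Dual

variable {α : Type*} [Fintype α] [DecidableEq α]

def dualRank (rk : Finset α → ℤ) (A : Finset α) : ℤ := #A - rk univ + rk Aᶜ

variable {rk : Finset α → ℤ}

theorem dualRank_empty : dualRank rk ∅ = 0 := by
  simp [dualRank]

theorem dualRank_mono (hunit : ∀ (A : Finset α) (e : α), rk (insert e A) ≤ rk A + 1)
    {A B : Finset α} (h : A ⊆ B) : dualRank rk A ≤ dualRank rk B := by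
  have hcompl : Bᶜ ∪ (B \ A) = Aᶜ := by
    ext x
    simp only [mem_union, mem_compl, mem_sdiff]
    tauto
  have hrk := rk_union_le_add_card hunit Bᶜ (B \ A)
  have hcard := card_sdiff_add_card_eq_card h
  rw [hcompl] at hrk
  unfold dualRank
  push_cast [← hcard]
  linarith

theorem dualRank_union_add_inter_le
    (hsub : ∀ A B : Finset α, rk (A ∪ B) + rk (A ∩ B) ≤ rk A + rk B) (A B : Finset α) :
    dualRank rk (A ∪ B) + dualRank rk (A ∩ B) ≤ dualRank rk A + dualRank rk B := by
  have hrk := hsub Aᶜ Bᶜ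
  have hcard := card_union_add_card_inter A B
  rw [← compl_inter, ← compl_union] at hrk
  unfold dualRank
  linarith [congrArg (Nat.cast : ℕ → ℤ) hcard]

theorem dualRank_insert_le (hmono : ∀ A B : Finset α, A ⊆ B → rk A ≤ rk B)
    (A : Finset α) (e : α) : dualRank rk (insert e A) ≤ dualRank rk A + 1 := by
  have hrk := hmono _ _ (compl_subset_compl.mpr (subset_insert e A))
  have hcard : (#(insert e A) : ℤ) ≤ #A + 1 := by exact_mod_cast card_insert_le e A
  unfold dualRank
  linarith

theorem dualRank_insert_eq_iff (hmono : ∀ A B : Finset α, A ⊆ B → rk A ≤ rk B)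
    (hunit : ∀ (A : Finset α) (e : α), rk (insert e A) ≤ rk A + 1) {A : Finset α} {e : α}
    (he : e ∉ A) : dualRank rk (insert e A) = dualRank rk A ↔ rk Aᶜ ≠ rk (insert e A)ᶜ := by
  have hle := hmono _ _ (compl_subset_compl.mpr (subset_insert e A))
  have hle' := hunit (insert e A)ᶜ e
  rw [insert_compl_insert he] at hle'
  unfold dualRank
  rw [card_insert_of_notMem he, Nat.cast_succ]
  omega

theorem dvd_of_dualRank_insert {m : Finset α → ℕ}
    (hmono : ∀ A B : Finset α, A ⊆ B → rk A ≤ rk B)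
    (hunit : ∀ (A : Finset α) (e : α), rk (insert e A) ≤ rk A + 1)
    (hA1 : ∀ (A : Finset α) (e : α), e ∉ A →
      (rk (insert e A) = rk A → m (insert e A) ∣ m A) ∧
      (rk (insert e A) ≠ rk A → m A ∣ m (insert e A)))
    {A : Finset α} {e : α} (he : e ∉ A) :
    (dualRank rk (insert e A) = dualRank rk A → m (insert e A)ᶜ ∣ m Aᶜ) ∧
    (dualRank rk (insert e A) ≠ dualRank rk A → m Aᶜ ∣ m (insert e A)ᶜ) := by
  have hA1' := hA1 (insert e A)ᶜ e (by simp)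
  rw [insert_compl_insert he] at hA1'
  simp only [ne_eq, dualRank_insert_eq_iff hmono hunit he, not_not]
  exact hA1'.symm

theorem IsMoleculeWith.compl_union_union_eq {R F T : Finset α}
    (h : IsMoleculeWith rk R F T) : (R ∪ F ∪ T)ᶜ ∪ T ∪ F = Rᶜ := by
  obtain ⟨hRF, hRT, hFT, -⟩ := h
  rw [compl_union_union_cancel (disjoint_union_left.mpr ⟨hRT, hFT⟩),
    compl_union_union_cancel hRF]

theorem IsMoleculeWith.compl_of_dualRank {R F T : Finset α}
    (h : IsMoleculeWith (dualRank rk) R F T) : IsMoleculeWith rk (R ∪ F ∪ T)ᶜ T F := by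
  have hS := h.compl_union_union_eq
  obtain ⟨hRF, hRT, hFT, hrk⟩ := h
  set S := R ∪ F ∪ T
  have hFS : F ⊆ S := subset_union_right.trans subset_union_left
  refine ⟨disjoint_compl_left_iff.mpr subset_union_right, disjoint_compl_left_iff.mpr hFS,
    hFT.symm, fun B hSB hBR => ?_⟩
  rw [hS] at hBR
  have hBcS : Bᶜ ⊆ S := compl_le_iff_compl_le.mp hSB
  -- compare the dual molecule identity at `Bᶜ` with the one at `S`; the rest is counting
  have hrkB := hrk Bᶜ (subset_compl_comm.mp hBR) hBcS
  have hrkS := hrk S (subset_union_left.trans subset_union_left) subset_rfl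
  have hSF : S ∩ F = F := inter_eq_right.mpr hFS
  have hBS : B ∩ S = B ∩ F ∪ B ∩ T := by
    ext x
    have := @hBR x
    simp only [S, mem_inter, mem_union, mem_compl] at this ⊢
    tauto
  have hcardS := card_sdiff_add_card_eq_card hBcS
  have hcardBS : #(B ∩ S) = #(B ∩ F) + #(B ∩ T) := by
    rw [hBS, card_union_of_disjoint (hFT.mono inter_subset_right inter_subset_right)]
  have hcardF := card_sdiff_add_card_inter F B
  rw [sdiff_compl, inf_eq_inter, inter_comm] at hcardS
  rw [sdiff_eq_inter_compl, inter_comm F, inter_comm F] at hcardF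
  rw [hSF] at hrkS
  simp only [dualRank, compl_compl] at hrkB hrkS
  linarith [congrArg (Nat.cast : ℕ → ℤ) hcardS, congrArg (Nat.cast : ℕ → ℤ) hcardBS,
    congrArg (Nat.cast : ℕ → ℤ) hcardF]

theorem mul_eq_of_dualRank_molecule {m : Finset α → ℕ}
    (hA2 : ∀ R F T : Finset α, IsMoleculeWith rk R F T →
      m R * m (R ∪ F ∪ T) = m (R ∪ F) * m (R ∪ T))
    {R F T : Finset α} (h : IsMoleculeWith (dualRank rk) R F T) :
    m Rᶜ * m (R ∪ F ∪ T)ᶜ = m (R ∪ F)ᶜ * m (R ∪ T)ᶜ := by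
  have hA2' := hA2 _ _ _ h.compl_of_dualRank
  rw [h.compl_union_union_eq] at hA2'
  obtain ⟨hRF, hRT, hFT, -⟩ := h
  rw [compl_union_union_cancel (disjoint_union_left.mpr ⟨hRT, hFT⟩), union_right_comm,
    compl_union_union_cancel (disjoint_union_left.mpr ⟨hRF, hFT.symm⟩)] at hA2'
  rw [union_right_comm, mul_comm]
  exact hA2'

theorem rho_compl (m : Finset α → ℕ) {R S : Finset α} (F T : Finset α)
    (hcard : #S = #R + #F + #T) : rho (fun A => m Aᶜ) T R S = rho m F Sᶜ Rᶜ := by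
  unfold rho
  rw [mul_sum, mul_sum]
  refine sum_nbij' compl compl (fun A hA => ?_) (fun B hB => ?_) (fun A _ => compl_compl A)
    (fun B _ => compl_compl B) (fun A hA => ?_)
  · simpa [mem_Icc, compl_subset_compl, and_comm] using hA
  · simpa [mem_Icc, compl_le_iff_compl_le, subset_compl_comm, and_comm] using hB
  · obtain ⟨hRA, hAS⟩ := mem_Icc.mp hA
    have := card_le_card hRA
    have := card_le_card hAS
    have := card_le_univ S
    simp only [← mul_assoc, ← pow_add, card_compl]
    congr 1
    apply neg_one_pow_congr
    simp only [Nat.even_iff]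
    omega

end Dual

/-- the dual of an arithmetic matroid, with rank
`rk*(A) = |A| - rk(E) + rk(E∖A)` and multiplicity `m*(A) = m(E∖A)`, is again an
arithmetic matroid. -/
theorem dual_arithmetic_matroid {α : Type*} [Fintype α] [DecidableEq α]
    (rk : Finset α → ℤ) (m : Finset α → ℕ)
    (h : IsArithmeticMatroid rk m) :
    IsArithmeticMatroid
      (fun A => (A.card : ℤ) - rk Finset.univ + rk (Finset.univ \ A))
      (fun A => m (Finset.univ \ A)) := by
  obtain ⟨-, hmono, hsub, hunit, hA1, hA2, hP⟩ := h
  show IsArithmeticMatroid (dualRank rk) (fun A => m Aᶜ)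
  refine ⟨dualRank_empty, fun _ _ => dualRank_mono hunit, dualRank_union_add_inter_le hsub,
    dualRank_insert_le hmono, fun _ _ => dvd_of_dualRank_insert hmono hunit hA1,
    fun _ _ _ => mul_eq_of_dualRank_molecule hA2, fun R F T hM => ?_⟩
  rw [rho_compl m F T hM.card_union_union, ← hM.compl_union_union_eq]
  exact hP _ _ _ hM.compl_of_dualRank
end

section
/- Crapo's theorem for the multivariate Tutte polynomial: for a matroid M on a totally ordered ground set E with bases B, Z_M(q,v) = q^{-rk(E)} Σ_{B∈B} (Π_{b∈B} v_b)(Π_{e∈E(B)}(v_e+1))(Π_{i∈I(B)}(q/v_i + 1)). -/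
open scoped Classical

/-- `B` is a basis of the matroid with rank function `rk`. -/
def IsBasis {α : Type*} [Fintype α] [DecidableEq α] (rk : Finset α → ℕ)
    (B : Finset α) : Prop :=
  rk B = B.card ∧ rk B = rk Finset.univ

/-- Externally active elements of the basis `B`. -/
def extAct {α : Type*} [Fintype α] [LinearOrder α] (rk : Finset α → ℕ)
    (B : Finset α) : Finset α :=
  (Finset.univ \ B).filter
    (fun e => rk (insert e (B.filter (fun b => e < b))) = rk (B.filter (fun b => e < b)))

/-- Internally active elements of the basis `B`. -/
noncomputable def intAct {α : Type*} [Fintype α] [LinearOrder α] (rk : Finset α → ℕ)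
    (B : Finset α) : Finset α :=
  B.filter (fun e => ∀ f : α, f < e → ¬ IsBasis rk (insert f (B.erase e)))

/-!
For a subset `A`, run the greedy algorithm on the ground set scanned in the order "`A`
decreasingly, then the complement of `A` increasingly", producing a basis `φ(A)`. Every element
of `φ(A) \ A` is internally active and every element of `A \ φ(A)` externally active for
`φ(A)`; conversely the matroid exchange property shows that `φ(A) = B` for every basis `B`
with `B \ A ⊆ I(B)` and `A \ B ⊆ E(B)`. Hence the fibres of `φ` are the intervals
`{(B \ S) ∪ T | S ⊆ I(B), T ⊆ E(B)}`, on which the rank equals `|B| - |S|`, and the sum of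
`q ^ (-rk A) * v ^ A` over such an interval factorises into the summand on the right.
-/

open Finset

structure IsMatroidRankFn {α : Type*} [DecidableEq α] (rk : Finset α → ℕ) : Prop where
  empty : rk ∅ = 0
  mono : ∀ A B : Finset α, A ⊆ B → rk A ≤ rk B
  submod : ∀ A B : Finset α, rk (A ∪ B) + rk (A ∩ B) ≤ rk A + rk B
  insert_le : ∀ (A : Finset α) (e : α), rk (insert e A) ≤ rk A + 1

namespace IsMatroidRankFn

variable {α : Type*} [DecidableEq α] {rk : Finset α → ℕ} (h : IsMatroidRankFn rk)
include h

theorem rank_union_le_add_card (A T : Finset α) : rk (A ∪ T) ≤ rk A + T.card := by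
  induction T using Finset.induction_on with
  | empty => simp
  | insert t T ht ih =>
    rw [union_insert, card_insert_of_notMem ht]
    linarith [h.insert_le (A ∪ T) t]

theorem rank_le_card (A : Finset α) : rk A ≤ A.card := by
  simpa [h.empty] using h.rank_union_le_add_card ∅ A

theorem rank_eq_card_of_subset {B S : Finset α} (hB : rk B = B.card) (hSB : S ⊆ B) :
    rk S = S.card := by
  have hunion := h.rank_union_le_add_card S (B \ S)
  rw [union_sdiff_of_subset hSB, card_sdiff_of_subset hSB] at hunion
  have := card_le_card hSB
  have := h.rank_le_card S
  omega

end IsMatroidRankFn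

def rankClosure {α : Type*} [Fintype α] [DecidableEq α] (rk : Finset α → ℕ)
    (X : Finset α) : Finset α :=
  univ.filter fun e => rk (insert e X) = rk X

section RankClosure

variable {α : Type*} [Fintype α] [DecidableEq α] {rk : Finset α → ℕ}

theorem mem_rankClosure {X : Finset α} {e : α} :
    e ∈ rankClosure rk X ↔ rk (insert e X) = rk X := by
  simp [rankClosure]

theorem subset_rankClosure (X : Finset α) : X ⊆ rankClosure rk X :=
  fun _ he => mem_rankClosure.2 (by rw [insert_eq_of_mem he])

namespace IsMatroidRankFn

variable (h : IsMatroidRankFn rk)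
include h

theorem rankClosure_mono {X Y : Finset α} (hXY : X ⊆ Y) :
    rankClosure rk X ⊆ rankClosure rk Y := by
  intro e he
  rw [mem_rankClosure] at he ⊢
  have hsub : insert e Y ⊆ Y ∪ insert e X := by
    intro x hx
    rcases mem_insert.1 hx with rfl | hx <;> simp [*]
  have := h.submod Y (insert e X)
  have := h.mono _ _ hsub
  have := h.mono _ _ (subset_inter hXY (subset_insert e X))
  have := h.mono _ _ (subset_insert e Y)
  omega

theorem rank_union_eq_of_subset_rankClosure {X T : Finset α} (hT : T ⊆ rankClosure rk X) :
    rk (X ∪ T) = rk X := by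
  induction T using Finset.induction_on with
  | empty => simp
  | insert t T _ ih =>
    have hT' : rk (X ∪ T) = rk X := ih ((subset_insert t T).trans hT)
    have ht := h.rankClosure_mono (subset_union_left (s₂ := T)) (hT (mem_insert_self t T))
    rw [mem_rankClosure, hT'] at ht
    rw [union_insert, ht]

theorem rankClosure_subset_of_subset {X Y : Finset α} (hY : Y ⊆ rankClosure rk X) :
    rankClosure rk Y ⊆ rankClosure rk X := by
  intro e he
  have hXY := h.rank_union_eq_of_subset_rankClosure hY
  have he' := h.rankClosure_mono (subset_union_right (s₁ := X)) he
  rw [mem_rankClosure] at he' ⊢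
  have := h.mono _ _ (insert_subset_insert e (subset_union_left (s₁ := X) (s₂ := Y)))
  have := h.mono _ _ (subset_insert e X)
  omega

theorem notMem_rankClosure_erase {B : Finset α} {b : α} (hB : rk B = B.card) (hb : b ∈ B) :
    b ∉ rankClosure rk (B.erase b) := by
  rw [mem_rankClosure, insert_erase hb, hB,
    h.rank_eq_card_of_subset hB (erase_subset b B), card_erase_of_mem hb]
  have := card_pos.2 ⟨b, hb⟩
  omega

/-- Otherwise `d` would be spanned by `B - d + e`, a set of rank `|B| - 1`. -/
theorem mem_rankClosure_erase {B S : Finset α} {d e : α} (hB : rk B = B.card) (hSB : S ⊆ B)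
    (heB : e ∈ rankClosure rk (B.erase d)) (heS : e ∈ rankClosure rk S) :
    e ∈ rankClosure rk (S.erase d) := by
  by_cases hdS : d ∉ S
  · rwa [erase_eq_of_notMem hdS]
  rw [not_not] at hdS
  by_contra he
  rw [mem_rankClosure] at heB heS he
  have hS := h.rank_eq_card_of_subset hB hSB
  have hSd := h.rank_eq_card_of_subset hB ((erase_subset d S).trans hSB)
  rw [card_erase_of_mem hdS] at hSd
  have := card_pos.2 ⟨d, hdS⟩
  have := h.insert_le (S.erase d) e
  have := h.mono _ _ (subset_insert e (S.erase d))
  have hd : d ∈ rankClosure rk (insert e (S.erase d)) := by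
    rw [mem_rankClosure, insert_comm, insert_erase hdS]
    omega
  have hd' := h.rankClosure_mono (insert_subset_insert e (erase_subset_erase d hSB)) hd
  rw [mem_rankClosure, insert_comm, insert_erase (hSB hdS), heB] at hd'
  have := h.mono _ _ (subset_insert e B)
  have := h.rank_le_card (B.erase d)
  rw [card_erase_of_mem (hSB hdS)] at this
  have := card_pos.2 ⟨d, hSB hdS⟩
  omega

theorem mem_rankClosure_sdiff {B S D : Finset α} {e : α} (hB : rk B = B.card) (hSB : S ⊆ B)
    (hD : ∀ d ∈ D, e ∈ rankClosure rk (B.erase d)) (heS : e ∈ rankClosure rk S) :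
    e ∈ rankClosure rk (S \ D) := by
  induction D using Finset.induction_on with
  | empty => simpa
  | insert d D _ ih =>
    rw [sdiff_insert]
    exact h.mem_rankClosure_erase hB (sdiff_subset.trans hSB) (hD d (mem_insert_self d D))
      (ih fun x hx => hD x (mem_insert_of_mem hx))

end IsMatroidRankFn

end RankClosure

section Basis

variable {α : Type*} [Fintype α] [DecidableEq α] {rk : Finset α → ℕ}

theorem IsBasis.univ_subset_rankClosure (h : IsMatroidRankFn rk) {B : Finset α}
    (hB : IsBasis rk B) : univ ⊆ rankClosure rk B := by
  intro e _
  rw [mem_rankClosure]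
  have := h.mono _ _ (subset_insert e B)
  have := h.mono _ _ (subset_univ (insert e B))
  have := hB.2
  omega

theorem IsMatroidRankFn.isBasis_of_univ_subset_rankClosure (h : IsMatroidRankFn rk)
    {B : Finset α} (hB : rk B = B.card) (hspan : univ ⊆ rankClosure rk B) : IsBasis rk B := by
  refine ⟨hB, ?_⟩
  rw [← h.rank_union_eq_of_subset_rankClosure hspan, union_eq_right.2 (subset_univ B)]

theorem IsBasis.not_isBasis_insert_erase (h : IsMatroidRankFn rk) {B : Finset α} {b f : α}
    (hB : IsBasis rk B) (hb : b ∈ B) (hf : f ∈ rankClosure rk (B.erase b)) :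
    ¬IsBasis rk (insert f (B.erase b)) := by
  intro hf'
  have hrk := hf'.2
  rw [mem_rankClosure.1 hf, h.rank_eq_card_of_subset hB.1 (erase_subset b B),
    card_erase_of_mem hb, ← hB.2, hB.1] at hrk
  have := card_pos.2 ⟨b, hb⟩
  omega

theorem IsBasis.mem_rankClosure_erase_of_not_isBasis (h : IsMatroidRankFn rk) {B : Finset α}
    {b f : α} (hB : IsBasis rk B) (hb : b ∈ B) (hfb : f ≠ b)
    (hf : ¬IsBasis rk (insert f (B.erase b))) : f ∈ rankClosure rk (B.erase b) := by
  by_cases hfB : f ∈ B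
  · exact subset_rankClosure _ (mem_erase.2 ⟨hfb, hfB⟩)
  rw [mem_rankClosure]
  by_contra hne
  apply hf
  have hcard : (insert f (B.erase b)).card = B.card := by
    rw [card_insert_of_notMem fun hf => hfB (mem_of_mem_erase hf), card_erase_of_mem hb]
    have := card_pos.2 ⟨b, hb⟩
    omega
  have hBb := h.rank_eq_card_of_subset hB.1 (erase_subset b B)
  rw [card_erase_of_mem hb] at hBb
  have := h.insert_le (B.erase b) f
  have := h.mono _ _ (subset_insert f (B.erase b))
  have := card_pos.2 ⟨b, hb⟩
  have := hB.1
  have := hB.2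
  constructor <;> omega

end Basis

section Predecessors

variable {α β : Type*} [Fintype α] [LinearOrder β]

def predecessors (κ : α → β) (e : α) : Finset α :=
  univ.filter fun f => κ f < κ e

theorem mem_predecessors {κ : α → β} {e f : α} : f ∈ predecessors κ e ↔ κ f < κ e := by
  simp [predecessors]

theorem predecessors_subset_predecessors {κ : α → β} {e f : α}
    (hf : f ∈ predecessors κ e) : predecessors κ f ⊆ predecessors κ e := fun _ hg =>
  mem_predecessors.2 ((mem_predecessors.1 hg).trans (mem_predecessors.1 hf))

theorem notMem_predecessors_self (κ : α → β) (e : α) : e ∉ predecessors κ e := by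
  simp [mem_predecessors]

end Predecessors

section Greedy

variable {α β : Type*} [Fintype α] [DecidableEq α] [LinearOrder β] {rk : Finset α → ℕ}

def greedyBasis (rk : Finset α → ℕ) (κ : α → β) : Finset α :=
  univ.filter fun e => e ∉ rankClosure rk (predecessors κ e)

theorem mem_greedyBasis {κ : α → β} {e : α} :
    e ∈ greedyBasis rk κ ↔ e ∉ rankClosure rk (predecessors κ e) := by
  simp [greedyBasis]

namespace IsMatroidRankFn

variable (h : IsMatroidRankFn rk)
include h

theorem rank_greedyBasis {κ : α → β} (hκ : Function.Injective κ) :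
    rk (greedyBasis rk κ) = (greedyBasis rk κ).card := by
  set G := greedyBasis rk κ
  suffices ∀ s : Finset α, rk (G ∩ s) = (G ∩ s).card by simpa using this univ
  intro s
  induction s using Finset.induction_on_max_value κ with
  | empty => simpa using h.empty
  | insert a s ha hmax ih =>
    by_cases haG : a ∈ G
    · have hsub : G ∩ s ⊆ predecessors κ a := fun x hx =>
        mem_predecessors.2 <| (hmax x (mem_inter.1 hx).2).lt_of_ne
          fun hxa => ha (hκ hxa ▸ (mem_inter.1 hx).2)
      have hnot : a ∉ rankClosure rk (G ∩ s) := fun ha' =>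
        mem_greedyBasis.1 haG (h.rankClosure_mono hsub ha')
      rw [mem_rankClosure] at hnot
      rw [inter_insert_of_mem haG, card_insert_of_notMem fun ha' => ha (mem_inter.1 ha').2]
      have := h.insert_le (G ∩ s) a
      have := h.mono _ _ (subset_insert a (G ∩ s))
      omega
    · rwa [inter_insert_of_notMem haG]

theorem predecessors_subset_rankClosure_greedyBasis_inter (κ : α → β) (e : α) :
    predecessors κ e ⊆ rankClosure rk (greedyBasis rk κ ∩ predecessors κ e) := by
  induction e using (Finite.wellFounded_of_trans_of_irrefl (InvImage (· < ·) κ)).induction with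
  | _ e ih =>
  intro f hf
  by_cases hfG : f ∈ greedyBasis rk κ
  · exact subset_rankClosure _ (mem_inter.2 ⟨hfG, hf⟩)
  have hfP : f ∈ rankClosure rk (predecessors κ f) := not_not.1 (mem_greedyBasis.not.1 hfG)
  exact h.rankClosure_mono (inter_subset_inter_left (predecessors_subset_predecessors hf))
    (h.rankClosure_subset_of_subset (ih f (mem_predecessors.1 hf)) hfP)

theorem mem_rankClosure_greedyBasis_inter {κ : α → β} {e : α} (he : e ∉ greedyBasis rk κ) :
    e ∈ rankClosure rk (greedyBasis rk κ ∩ predecessors κ e) :=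
  h.rankClosure_subset_of_subset (h.predecessors_subset_rankClosure_greedyBasis_inter κ e)
    (not_not.1 (mem_greedyBasis.not.1 he))

theorem greedyBasis_isBasis {κ : α → β} (hκ : Function.Injective κ) :
    IsBasis rk (greedyBasis rk κ) := by
  refine h.isBasis_of_univ_subset_rankClosure (h.rank_greedyBasis hκ) fun e _ => ?_
  by_cases he : e ∈ greedyBasis rk κ
  · exact subset_rankClosure _ he
  · exact h.rankClosure_mono inter_subset_left (h.mem_rankClosure_greedyBasis_inter he)

theorem greedyBasis_eq {κ : α → β} {B : Finset α} (hB : rk B = B.card)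
    (hspan : ∀ e ∉ B, e ∈ rankClosure rk (B ∩ predecessors κ e)) :
    greedyBasis rk κ = B := by
  ext e
  rw [mem_greedyBasis]
  constructor
  · intro he
    by_contra heB
    exact he (h.rankClosure_mono inter_subset_right (hspan e heB))
  · intro heB he
    have hpred : predecessors κ e ⊆ rankClosure rk (B ∩ predecessors κ e) := by
      intro f hf
      by_cases hfB : f ∈ B
      · exact subset_rankClosure _ (mem_inter.2 ⟨hfB, hf⟩)
      · exact h.rankClosure_mono (inter_subset_inter_left (predecessors_subset_predecessors hf))
          (hspan f hfB)
    have hsub : B ∩ predecessors κ e ⊆ B.erase e := fun x hx =>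
      mem_erase.2 ⟨fun hxe => notMem_predecessors_self κ e (hxe ▸ (mem_inter.1 hx).2),
        (mem_inter.1 hx).1⟩
    exact h.notMem_rankClosure_erase hB heB
      (h.rankClosure_mono hsub (h.rankClosure_subset_of_subset hpred he))

end IsMatroidRankFn

end Greedy

section ActivityKey

variable {α : Type*} [LinearOrder α]

/-- The order in which the greedy algorithm scans the ground set for the subset `A`:
first `A` in decreasing order, then its complement in increasing order. -/
def activityKey (A : Finset α) (e : α) : αᵒᵈ ⊕ₗ α :=
  if e ∈ A then toLex (Sum.inl (OrderDual.toDual e)) else toLex (Sum.inr e)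

theorem activityKey_injective (A : Finset α) : Function.Injective (activityKey A) := by
  intro e f hef
  unfold activityKey at hef
  split_ifs at hef <;> simp_all

end ActivityKey

section Activity

variable {α : Type*} [Fintype α] [LinearOrder α] {rk : Finset α → ℕ}

theorem mem_extAct {B : Finset α} {e : α} :
    e ∈ extAct rk B ↔ e ∉ B ∧ e ∈ rankClosure rk (B.filter (e < ·)) := by
  simp [extAct, mem_rankClosure]

theorem intAct_subset (rk : Finset α → ℕ) (B : Finset α) : intAct rk B ⊆ B :=
  filter_subset _ B

theorem disjoint_extAct (rk : Finset α → ℕ) (B : Finset α) : Disjoint (extAct rk B) B :=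
  disjoint_left.2 fun _ he => (mem_extAct.1 he).1

theorem IsBasis.mem_rankClosure_erase_of_mem_intAct (h : IsMatroidRankFn rk) {B : Finset α}
    {d e : α} (hB : IsBasis rk B) (hd : d ∈ intAct rk B) (hed : e < d) :
    e ∈ rankClosure rk (B.erase d) :=
  hB.mem_rankClosure_erase_of_not_isBasis h (intAct_subset rk B hd) hed.ne
    ((mem_filter.1 hd).2 e hed)

theorem IsBasis.mem_rankClosure_sdiff_of_subset_intAct (h : IsMatroidRankFn rk)
    {B S D : Finset α} {e : α} (hB : IsBasis rk B) (hSB : S ⊆ B) (hD : D ⊆ intAct rk B)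
    (heD : ∀ d ∈ D, e < d) (heS : e ∈ rankClosure rk S) : e ∈ rankClosure rk (S \ D) :=
  h.mem_rankClosure_sdiff hB.1 hSB
    (fun d hd => hB.mem_rankClosure_erase_of_mem_intAct h (hD hd) (heD d hd)) heS

theorem IsBasis.rank_sdiff_union (h : IsMatroidRankFn rk) {B S T : Finset α}
    (hB : IsBasis rk B) (hS : S ⊆ intAct rk B) (hT : T ⊆ extAct rk B) :
    rk ((B \ S) ∪ T) + S.card = B.card := by
  have hSB := hS.trans (intAct_subset rk B)
  have hspan : T ⊆ rankClosure rk (B \ S) := by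
    intro t ht
    refine h.rankClosure_mono ?_ (hB.mem_rankClosure_sdiff_of_subset_intAct h
      (filter_subset _ B) ((filter_subset _ S).trans hS) (fun d hd => (mem_filter.1 hd).2)
      (mem_extAct.1 (hT ht)).2)
    intro x
    simp only [mem_sdiff, mem_filter]
    tauto
  rw [h.rank_union_eq_of_subset_rankClosure hspan, h.rank_eq_card_of_subset hB.1 sdiff_subset,
    card_sdiff_of_subset hSB, Nat.sub_add_cancel (card_le_card hSB)]

theorem mem_predecessors_activityKey_of_mem {A : Finset α} {e f : α} (he : e ∈ A) :
    f ∈ predecessors (activityKey A) e ↔ f ∈ A ∧ e < f := by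
  by_cases hf : f ∈ A <;> simp [mem_predecessors, activityKey, he, hf]

theorem mem_predecessors_activityKey_of_notMem {A : Finset α} {e f : α} (he : e ∉ A) :
    f ∈ predecessors (activityKey A) e ↔ f ∈ A ∨ f < e := by
  by_cases hf : f ∈ A <;> simp [mem_predecessors, activityKey, he, hf]

end Activity

section GreedyActivity

variable {α : Type*} [Fintype α] [LinearOrder α] {rk : Finset α → ℕ}

namespace IsMatroidRankFn

variable (h : IsMatroidRankFn rk)
include h

theorem sdiff_greedyBasis_subset_extAct (A : Finset α) :
    A \ greedyBasis rk (activityKey A) ⊆ extAct rk (greedyBasis rk (activityKey A)) := by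
  intro e he
  obtain ⟨heA, heG⟩ := mem_sdiff.1 he
  refine mem_extAct.2 ⟨heG, h.rankClosure_mono ?_ (h.mem_rankClosure_greedyBasis_inter heG)⟩
  intro x hx
  rw [mem_inter, mem_predecessors_activityKey_of_mem heA] at hx
  exact mem_filter.2 ⟨hx.1, hx.2.2⟩

theorem greedyBasis_sdiff_subset_intAct (A : Finset α) :
    greedyBasis rk (activityKey A) \ A ⊆ intAct rk (greedyBasis rk (activityKey A)) := by
  intro b hb
  obtain ⟨hbG, hbA⟩ := mem_sdiff.1 hb
  refine mem_filter.2 ⟨hbG, fun f hfb => ?_⟩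
  have hf : f ∈ predecessors (activityKey A) b :=
    (mem_predecessors_activityKey_of_notMem hbA).2 (Or.inr hfb)
  have hsub : greedyBasis rk (activityKey A) ∩ predecessors (activityKey A) b ⊆
      (greedyBasis rk (activityKey A)).erase b := fun x hx =>
    mem_erase.2 ⟨fun hxb => notMem_predecessors_self _ b (hxb ▸ (mem_inter.1 hx).2),
      (mem_inter.1 hx).1⟩
  exact (h.greedyBasis_isBasis (activityKey_injective A)).not_isBasis_insert_erase h hbG
    (h.rankClosure_mono hsub (h.predecessors_subset_rankClosure_greedyBasis_inter _ b hf))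

/-- Each `e ∉ B` is spanned by `B ∩ {f | e < f}` (by all of `B` when `e ∉ A`), and removing
the internally active elements of `B \ A` above `e` keeps it spanned. -/
theorem greedyBasis_activityKey_eq {A B : Finset α} (hB : IsBasis rk B)
    (hI : B \ A ⊆ intAct rk B) (hE : A \ B ⊆ extAct rk B) :
    greedyBasis rk (activityKey A) = B := by
  refine h.greedyBasis_eq hB.1 fun e heB => ?_
  have hD : (B \ A).filter (e < ·) ⊆ intAct rk B := (filter_subset _ _).trans hI
  have heD : ∀ d ∈ (B \ A).filter (e < ·), e < d := fun d hd => (mem_filter.1 hd).2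
  by_cases heA : e ∈ A
  · refine h.rankClosure_mono ?_ (hB.mem_rankClosure_sdiff_of_subset_intAct h
      (filter_subset _ B) hD heD (mem_extAct.1 (hE (mem_sdiff.2 ⟨heA, heB⟩))).2)
    intro x hx
    simp only [mem_sdiff, mem_filter, mem_inter, mem_predecessors_activityKey_of_mem heA] at hx ⊢
    tauto
  · refine h.rankClosure_mono ?_ (hB.mem_rankClosure_sdiff_of_subset_intAct h
      subset_rfl hD heD (hB.univ_subset_rankClosure h (mem_univ e)))
    intro x hx
    simp only [mem_sdiff, mem_filter, mem_inter, mem_predecessors_activityKey_of_notMem heA]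
      at hx ⊢
    refine ⟨hx.1, or_iff_not_imp_left.2 fun hxA => ?_⟩
    exact lt_of_le_of_ne (not_lt.1 fun hex => hx.2 ⟨⟨hx.1, hxA⟩, hex⟩)
      fun hxe => heB (hxe ▸ hx.1)

theorem greedyBasis_activityKey_eq_iff {A B : Finset α} (hB : IsBasis rk B) :
    greedyBasis rk (activityKey A) = B ↔ B \ A ⊆ intAct rk B ∧ A \ B ⊆ extAct rk B := by
  constructor
  · rintro rfl
    exact ⟨h.greedyBasis_sdiff_subset_intAct A, h.sdiff_greedyBasis_subset_extAct A⟩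
  · exact fun ⟨hI, hE⟩ => h.greedyBasis_activityKey_eq hB hI hE

end IsMatroidRankFn

end GreedyActivity

theorem sum_filter_sdiff_subset_and_sdiff_subset {α M : Type*} [Fintype α] [DecidableEq α]
    [AddCommMonoid M] (f : Finset α → M) {B I E : Finset α} (hI : I ⊆ B) (hE : Disjoint E B) :
    ∑ A ∈ univ.filter (fun A => B \ A ⊆ I ∧ A \ B ⊆ E), f A =
      ∑ S ∈ I.powerset, ∑ T ∈ E.powerset, f ((B \ S) ∪ T) := by
  have hsplit (A : Finset α) : B \ (B \ A) ∪ (A \ B) = A := by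
    ext x
    simp only [mem_union, mem_sdiff]
    tauto
  have hrecover {S T : Finset α} (hS : S ⊆ I) (hT : T ⊆ E) :
      B \ ((B \ S) ∪ T) = S ∧ ((B \ S) ∪ T) \ B = T := by
    have hTB := disjoint_left.1 hE
    constructor <;> ext x <;> simp only [mem_union, mem_sdiff] <;> grind
  rw [← sum_product']
  refine sum_nbij' (fun A => (B \ A, A \ B)) (fun p => (B \ p.1) ∪ p.2) ?_ ?_ ?_ ?_ ?_
  · intro A hA
    simpa using hA
  · rintro ⟨S, T⟩ hp
    rw [mem_product, mem_powerset, mem_powerset] at hp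
    obtain ⟨hS, hT⟩ := hrecover hp.1 hp.2
    rw [mem_filter]
    dsimp only
    rw [hS, hT]
    exact ⟨mem_univ _, hp⟩
  · intro A _
    exact hsplit A
  · rintro ⟨S, T⟩ hp
    rw [mem_product, mem_powerset, mem_powerset] at hp
    obtain ⟨hS, hT⟩ := hrecover hp.1 hp.2
    simp [hS, hT]
  · intro A _
    simp only [hsplit]

theorem sum_powerset_pow_card_mul_prod_sdiff {α K : Type*} [DecidableEq α] [Field K]
    {B I : Finset α} (hIB : I ⊆ B) (q : K) {v : α → K} (hv : ∀ i ∈ I, v i ≠ 0) :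
    ∑ S ∈ I.powerset, q ^ S.card * ∏ b ∈ B \ S, v b =
      (∏ b ∈ B, v b) * ∏ i ∈ I, (q / v i + 1) := by
  rw [prod_add_one, mul_sum]
  refine sum_congr rfl fun S hS => ?_
  have hSI := mem_powerset.1 hS
  rw [← prod_sdiff (hSI.trans hIB), mul_assoc, ← prod_mul_distrib,
    prod_congr rfl fun i hi => mul_div_cancel₀ q (hv i (hSI hi)), prod_const, mul_comm]

theorem IsBasis.sum_sdiff_union_eq {α K : Type*} [Fintype α] [LinearOrder α] [Field K]
    {rk : Finset α → ℕ} (h : IsMatroidRankFn rk) {B : Finset α} (hB : IsBasis rk B) {q : K}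
    (hq : q ≠ 0) {v : α → K} (hv : ∀ i ∈ intAct rk B, v i ≠ 0) :
    ∑ S ∈ (intAct rk B).powerset, ∑ T ∈ (extAct rk B).powerset,
        q ^ (-(rk ((B \ S) ∪ T) : ℤ)) * ∏ e ∈ (B \ S) ∪ T, v e =
      q ^ (-(rk univ : ℤ)) *
        ((∏ b ∈ B, v b) * (∏ e ∈ extAct rk B, (v e + 1)) *
          ∏ i ∈ intAct rk B, (q / v i + 1)) := by
  have hterm : ∀ S ∈ (intAct rk B).powerset, ∀ T ∈ (extAct rk B).powerset,
      q ^ (-(rk ((B \ S) ∪ T) : ℤ)) * ∏ e ∈ (B \ S) ∪ T, v e =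
        q ^ (-(rk univ : ℤ)) * ((q ^ S.card * ∏ b ∈ B \ S, v b) * ∏ e ∈ T, v e) := by
    intro S hS T hT
    have hrk := hB.rank_sdiff_union h (mem_powerset.1 hS) (mem_powerset.1 hT)
    have hexp : -(rk ((B \ S) ∪ T) : ℤ) = -(rk univ : ℤ) + S.card := by
      rw [← hB.2, hB.1]
      omega
    rw [hexp, zpow_add₀ hq, zpow_natCast, prod_union
      (((disjoint_extAct rk B).mono_left (mem_powerset.1 hT)).symm.mono_left sdiff_subset)]
    ring
  calc
    _ = ∑ S ∈ (intAct rk B).powerset, ∑ T ∈ (extAct rk B).powerset,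
          q ^ (-(rk univ : ℤ)) * ((q ^ S.card * ∏ b ∈ B \ S, v b) * ∏ e ∈ T, v e) :=
      sum_congr rfl fun S hS => sum_congr rfl (hterm S hS)
    _ = q ^ (-(rk univ : ℤ)) *
          ((∑ S ∈ (intAct rk B).powerset, q ^ S.card * ∏ b ∈ B \ S, v b) *
            ∑ T ∈ (extAct rk B).powerset, ∏ e ∈ T, v e) := by
      rw [sum_mul_sum, mul_sum]
      simp_rw [mul_sum]
    _ = _ := by
      rw [sum_powerset_pow_card_mul_prod_sdiff (intAct_subset rk B) q hv, ← prod_add_one]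
      ring

/-- Crapo's theorem for the multivariate Tutte polynomial:
`Z(q,v) = q^{-rk(E)} Σ_{B basis} (Π_{b∈B} v_b)(Π_{e∈E(B)}(v_e+1))(Π_{i∈I(B)}(q/v_i+1))`. -/
theorem multivariate_crapo {α : Type*} [Fintype α] [LinearOrder α]
    (rk : Finset α → ℕ)
    (hR0 : rk ∅ = 0)
    (hR1 : ∀ A B : Finset α, A ⊆ B → rk A ≤ rk B)
    (hR2 : ∀ A B : Finset α, rk (A ∪ B) + rk (A ∩ B) ≤ rk A + rk B)
    (hR3 : ∀ (A : Finset α) (e : α), rk (insert e A) ≤ rk A + 1)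
    (q : ℚ) (hq : q ≠ 0) (v : α → ℚ) (hv : ∀ e, v e ≠ 0) :
    ∑ A : Finset α, q ^ (-(rk A : ℤ)) * ∏ e ∈ A, v e =
      q ^ (-(rk (Finset.univ : Finset α) : ℤ)) *
        ∑ B ∈ Finset.univ.filter (fun B : Finset α => IsBasis rk B),
          (∏ b ∈ B, v b) * (∏ e ∈ extAct rk B, (v e + 1)) *
            (∏ i ∈ intAct rk B, (q / v i + 1)) := by
  have h : IsMatroidRankFn rk := ⟨hR0, hR1, hR2, hR3⟩
  rw [← sum_fiberwise_of_maps_to (g := fun A => greedyBasis rk (activityKey A))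
    fun A _ => mem_filter.2 ⟨mem_univ _, h.greedyBasis_isBasis (activityKey_injective A)⟩,
    mul_sum]
  refine sum_congr rfl fun B hB => ?_
  replace hB := (mem_filter.1 hB).2
  rw [filter_congr fun A _ => h.greedyBasis_activityKey_eq_iff hB,
    sum_filter_sdiff_subset_and_sdiff_subset _ (intAct_subset rk B) (disjoint_extAct rk B),
    hB.sum_sdiff_union_eq h hq fun i _ => hv i]
end
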